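/- For every odd integer d ≥ 3, the vectors of the set U_d^odd = (⋃_{k=0}^{(d−3)/2} C^{(d,d−2k)}) ∪ {S_d} in ℂ^(Fin d × Fin d × Fin d) are pairwise orthogonal and each is nonzero, and the set U_d^odd has exactly d³ − 4d + 4 elements. -/

import Mathlib

open scoped ComplexOrder

noncomputable section

/-- the standard basis vector e_a of ℂ^d (indexed by a natural number `a`;
it is the zero vector when `a ≥ d`). -/
def eV (d : ℕ) (a : ℕ) : Fin d → ℂ := fun k => if (k : ℕ) = a then 1 else 0

/-- ω_m = exp(2πi/m) -/
def wN (m : ℕ) : ℂ := Complex.exp (2 * Real.pi * Complex.I / m)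

/-- η_i^{(d−2k)} = Σ_{t=k}^{d−2−k} ω_{d−1−2k}^{i(t−k)} e_t -/
def etaG (d k i : ℕ) : Fin d → ℂ :=
  fun a => ∑ t ∈ Finset.Icc k (d - 2 - k), wN (d - 1 - 2 * k) ^ (i * (t - k)) * eV d t a

/-- ξ_j^{(d−2k)} = Σ_{t=k}^{d−2−k} ω_{d−1−2k}^{j(t−k)} e_{t+1} -/
def xiG (d k j : ℕ) : Fin d → ℂ :=
  fun a => ∑ t ∈ Finset.Icc k (d - 2 - k), wN (d - 1 - 2 * k) ^ (j * (t - k)) * eV d (t + 1) a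

/-- the product vector u ⊗ v ⊗ w -/
def tpv (d : ℕ) (u v w : Fin d → ℂ) : Fin d × Fin d × Fin d → ℂ :=
  fun p => u p.1 * v p.2.1 * w p.2.2

/-- the stopper state S_d = (Σ e_i) ⊗ (Σ e_j) ⊗ (Σ e_k) -/
def stopD (d : ℕ) : Fin d × Fin d × Fin d → ℂ :=
  tpv d (fun a => ∑ i ∈ Finset.range d, eV d i a)
    (fun a => ∑ i ∈ Finset.range d, eV d i a)
    (fun a => ∑ i ∈ Finset.range d, eV d i a)

/-- the set C^{(d,d−2k)}, the union of the six families A₁, A₂, A₃, B₁, B₂, B₃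
indexed by (i,j) ∈ ℤ_{d−1−2k} × ℤ_{d−1−2k} \ {(0,0)} -/
def Cset (d k : ℕ) : Set (Fin d × Fin d × Fin d → ℂ) :=
  {x | ∃ i j : ℕ, i < d - 1 - 2 * k ∧ j < d - 1 - 2 * k ∧ ¬(i = 0 ∧ j = 0) ∧
      (x = tpv d (xiG d k j) (eV d k) (etaG d k i) ∨
       x = tpv d (xiG d k j) (etaG d k i) (eV d (d - 1 - k)) ∨
       x = tpv d (eV d (d - 1 - k)) (xiG d k j) (etaG d k i) ∨
       x = tpv d (etaG d k i) (eV d (d - 1 - k)) (xiG d k j) ∨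
       x = tpv d (etaG d k i) (xiG d k j) (eV d k) ∨
       x = tpv d (eV d k) (etaG d k i) (xiG d k j))}

/-- with φ_i = e_{(d−2)/2} + (−1)^i e_{d/2}, the set
A^{(d,0)} = { φ_r ⊗ φ_s ⊗ φ_t : (r,s,t) ≠ (0,0,0) } (for even d) -/
def phiE (d i : ℕ) : Fin d → ℂ :=
  fun a => eV d ((d - 2) / 2) a + (-1 : ℂ) ^ i * eV d (d / 2) a

def A0set (d : ℕ) : Set (Fin d × Fin d × Fin d → ℂ) :=
  {x | ∃ r s t : ℕ, r < 2 ∧ s < 2 ∧ t < 2 ∧ ¬(r = 0 ∧ s = 0 ∧ t = 0) ∧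
      x = tpv d (phiE d r) (phiE d s) (phiE d t)}

/-- U_d^odd = (⋃_{k=0}^{(d−3)/2} C^{(d,d−2k)}) ∪ {S_d} -/
def Uodd (d : ℕ) : Set (Fin d × Fin d × Fin d → ℂ) :=
  {x | ∃ k ≤ (d - 3) / 2, x ∈ Cset d k} ∪ {stopD d}

/-- U_d^even = (⋃_{k=0}^{(d−4)/2} C^{(d,d−2k)}) ∪ A^{(d,0)} ∪ {S_d} -/
def Ueven (d : ℕ) : Set (Fin d × Fin d × Fin d → ℂ) :=
  {x | ∃ k ≤ (d - 4) / 2, x ∈ Cset d k} ∪ A0set d ∪ {stopD d}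

/-- the standard Hermitian inner product on ℂ^(Fin d × Fin d × Fin d) -/
def inpD (d : ℕ) (x y : Fin d × Fin d × Fin d → ℂ) : ℂ :=
  ∑ p, (starRingEnd ℂ) (x p) * y p

/-- Ẽ = I_d ⊗ E acting on ℂ^(Fin d × Fin d × Fin d) -/
def ampBCD (d : ℕ) (E : Matrix (Fin d × Fin d) (Fin d × Fin d) ℂ) :
    Matrix (Fin d × Fin d × Fin d) (Fin d × Fin d × Fin d) ℂ :=
  fun p q => (if p.1 = q.1 then (1 : ℂ) else 0) * E p.2 q.2

/-!
Every vector of `U_d^odd` is a product vector, so inner products factor slot by slot. The factors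
of a vector of `C^{(d,d-2k)}` are `e_k`, `e_{d-1-k}`, `η` (supported on `[k, d-1-k)`) and `ξ`
(supported on `(k, d-1-k]`). Two vectors of different families, or of different levels `k`, have
disjoint supports. Within one family, distinct `(i, j)` differ in the frequency of `η` or of `ξ`,
which are then orthogonal as characters of `ℤ_m` sampled over a full period. Against the stopper
`S_d = 1 ⊗ 1 ⊗ 1` the nonzero frequency among `i, j` gives a full sum of nontrivial `m`-th roots of
unity. Pairwise orthogonality of nonzero vectors makes the parametrisation injective, and the count
is `1 + Σ_{k} 6 ((d-1-2k)^2 - 1) = d^3 - 4d + 4`.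
-/

open Finset

section InnerProduct

variable {d : ℕ} {x y : Fin d × Fin d × Fin d → ℂ}

lemma inpD_eq_dotProduct (x y : Fin d × Fin d × Fin d → ℂ) : inpD d x y = star x ⬝ᵥ y := rfl

lemma inpD_conj_symm (x y : Fin d × Fin d × Fin d → ℂ) : star (inpD d x y) = inpD d y x :=
  (Matrix.star_dotProduct y x).symm

lemma ne_of_inpD_eq_zero (hx : x ≠ 0) (h : inpD d x y = 0) : x ≠ y := by
  rintro rfl
  exact hx (dotProduct_star_self_eq_zero.mp h)

lemma inpD_eq_zero_of_disjoint (h : ∀ p, x p = 0 ∨ y p = 0) : inpD d x y = 0 :=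
  Finset.sum_eq_zero fun p _ => by rcases h p with h | h <;> simp [h]

lemma orthogonal_insert_image {ι : Type*} (s : Finset ι) (g : ι → Fin d × Fin d × Fin d → ℂ)
    {x₀ : Fin d × Fin d × Fin d → ℂ} (hx₀ : x₀ ≠ 0) (hg : ∀ p ∈ s, g p ≠ 0)
    (horth : ∀ p ∈ s, ∀ q ∈ s, p ≠ q → inpD d (g p) (g q) = 0)
    (hx₀orth : ∀ p ∈ s, inpD d (g p) x₀ = 0) :
    (∀ x ∈ insert x₀ (g '' s), x ≠ 0) ∧
      (∀ x ∈ insert x₀ (g '' s), ∀ y ∈ insert x₀ (g '' s), x ≠ y → inpD d x y = 0) ∧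
      (insert x₀ (g '' s)).ncard = s.card + 1 := by
  have hinj : Set.InjOn g s := fun p hp q hq hpq =>
    by_contra fun hne => ne_of_inpD_eq_zero (hg p hp) (horth p hp q hq hne) hpq
  have hx₀notMem : x₀ ∉ g '' s := by
    rintro ⟨p, hp, hpx⟩
    exact ne_of_inpD_eq_zero (hg p hp) (hx₀orth p hp) hpx
  refine ⟨?_, ?_, ?_⟩
  · rintro x (rfl | ⟨p, hp, rfl⟩)
    exacts [hx₀, hg p hp]
  · rintro x (rfl | ⟨p, hp, rfl⟩) y (rfl | ⟨q, hq, rfl⟩) hxy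
    · exact absurd rfl hxy
    · rw [← inpD_conj_symm, hx₀orth q hq, star_zero]
    · exact hx₀orth p hp
    · exact horth p hp q hq fun h => hxy (h ▸ rfl)
  · rw [Set.ncard_insert_of_notMem hx₀notMem (s.finite_toSet.image g), hinj.ncard_image,
      Set.ncard_coe_finset]

variable {u v w u' v' w' : Fin d → ℂ}

lemma inpD_tpv : inpD d (tpv d u v w) (tpv d u' v' w') =
    (star u ⬝ᵥ u') * (star v ⬝ᵥ v') * (star w ⬝ᵥ w') := by
  have hterm : ∀ p : Fin d × Fin d × Fin d, star (tpv d u v w p) * tpv d u' v' w' p =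
      (star (u p.1) * u' p.1) * (star (v p.2.1) * v' p.2.1) * (star (w p.2.2) * w' p.2.2) := by
    intro p; simp only [tpv, star_mul']; ring
  simp only [inpD_eq_dotProduct, dotProduct, Pi.star_apply, hterm, Fintype.sum_prod_type,
    ← Finset.mul_sum, ← Finset.sum_mul]

lemma tpv_ne_zero (hu : u ≠ 0) (hv : v ≠ 0) (hw : w ≠ 0) : tpv d u v w ≠ 0 := by
  obtain ⟨a, ha⟩ := Function.ne_iff.mp hu
  obtain ⟨b, hb⟩ := Function.ne_iff.mp hv
  obtain ⟨c, hc⟩ := Function.ne_iff.mp hw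
  exact Function.ne_iff.mpr ⟨(a, b, c), mul_ne_zero (mul_ne_zero ha hb) hc⟩

lemma tpv_apply_ne_zero_iff {p : Fin d × Fin d × Fin d} :
    tpv d u v w p ≠ 0 ↔ u p.1 ≠ 0 ∧ v p.2.1 ≠ 0 ∧ w p.2.2 ≠ 0 := by
  simp [tpv, not_or, and_assoc]

end InnerProduct

lemma IsPrimitiveRoot.sum_conj_pow_mul_pow_eq_zero {ζ : ℂ} {m i i' : ℕ}
    (hζ : IsPrimitiveRoot ζ m) (hi : i < m) (hi' : i' < m) (hne : i ≠ i') :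
    ∑ t ∈ range m, star (ζ ^ (i * t)) * ζ ^ (i' * t) = 0 := by
  have hm : m ≠ 0 := by omega
  set z := (ζ ^ i)⁻¹ * ζ ^ i'
  have hconj : star (ζ ^ i) = (ζ ^ i)⁻¹ :=
    (Complex.inv_eq_conj (by rw [norm_pow, hζ.norm'_eq_one hm, one_pow])).symm
  have hz : z ≠ 1 := fun h => hne <| hζ.pow_inj hi hi' <|
    (inv_mul_eq_one₀ (pow_ne_zero _ (hζ.ne_zero hm))).mp h
  have hzm : z ^ m = 1 := by
    rw [mul_pow, inv_pow, ← pow_mul, ← pow_mul, mul_comm i, mul_comm i', pow_mul, pow_mul,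
      hζ.pow_eq_one, one_pow, one_pow, inv_one, one_mul]
  calc ∑ t ∈ range m, star (ζ ^ (i * t)) * ζ ^ (i' * t) = ∑ t ∈ range m, z ^ t := by
        refine Finset.sum_congr rfl fun t _ => ?_
        rw [pow_mul, pow_mul, star_pow, hconj, ← mul_pow]
    _ = 0 := by rw [geom_sum_eq hz, hzm, sub_self, zero_div]

lemma wN_isPrimitiveRoot {m : ℕ} (hm : m ≠ 0) : IsPrimitiveRoot (wN m) m :=
  Complex.isPrimitiveRoot_exp m hm

lemma Fin.sum_univ_window_eq_sum_range {d s m : ℕ} (h : s + m ≤ d) (g : ℕ → ℂ) :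
    ∑ a : Fin d, (if s ≤ (a : ℕ) ∧ (a : ℕ) < s + m then g (a - s) else 0) =
      ∑ t ∈ range m, g t := by
  rw [Fin.sum_univ_eq_sum_range (fun a => if s ≤ a ∧ a < s + m then g (a - s) else 0),
    ← Finset.sum_filter]
  have hIco : (range d).filter (fun a => s ≤ a ∧ a < s + m) = Ico s (s + m) := by
    ext a; simp only [mem_filter, mem_range, mem_Ico]; omega
  rw [hIco, Finset.sum_Ico_eq_sum_range, add_tsub_cancel_left]
  simp

def fourierWindow (d s m i : ℕ) : Fin d → ℂ :=
  fun a => if s ≤ (a : ℕ) ∧ (a : ℕ) < s + m then wN m ^ (i * ((a : ℕ) - s)) else 0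

section FourierWindow

variable {d s m : ℕ}

lemma mem_Ico_of_fourierWindow_apply_ne_zero {i : ℕ} {a : Fin d}
    (h : fourierWindow d s m i a ≠ 0) : (a : ℕ) ∈ Set.Ico s (s + m) := by
  by_contra hout
  exact h (if_neg hout)

lemma fourierWindow_ne_zero (h : s + m ≤ d) (hm : m ≠ 0) (i : ℕ) : fourierWindow d s m i ≠ 0 :=
  Function.ne_iff.mpr ⟨⟨s, by omega⟩, by simp [fourierWindow, Nat.pos_of_ne_zero hm]⟩

lemma star_fourierWindow_dotProduct (h : s + m ≤ d) (i i' : ℕ) :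
    star (fourierWindow d s m i) ⬝ᵥ fourierWindow d s m i' =
      ∑ t ∈ range m, star (wN m ^ (i * t)) * wN m ^ (i' * t) := by
  rw [← Fin.sum_univ_window_eq_sum_range h]
  refine Finset.sum_congr rfl fun a _ => ?_
  simp only [fourierWindow, Pi.star_apply]
  split_ifs <;> simp

lemma star_fourierWindow_dotProduct_eq_zero (h : s + m ≤ d) {i i' : ℕ} (hi : i < m)
    (hi' : i' < m) (hne : i ≠ i') :
    star (fourierWindow d s m i) ⬝ᵥ fourierWindow d s m i' = 0 := by
  rw [star_fourierWindow_dotProduct h]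
  exact (wN_isPrimitiveRoot (by omega)).sum_conj_pow_mul_pow_eq_zero hi hi' hne

lemma star_fourierWindow_dotProduct_one (h : s + m ≤ d) {i : ℕ} (hi : i < m) (hi0 : i ≠ 0) :
    star (fourierWindow d s m i) ⬝ᵥ 1 = 0 := by
  have hone : star (fourierWindow d s m i) ⬝ᵥ 1 =
      star (fourierWindow d s m i) ⬝ᵥ fourierWindow d s m 0 :=
    Finset.sum_congr rfl fun a _ => by
      simp only [fourierWindow, Pi.star_apply, Pi.one_apply]
      split_ifs <;> simp
  rw [hone, star_fourierWindow_dotProduct_eq_zero h hi (by omega) hi0]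

end FourierWindow

section Components

variable {d k : ℕ}

lemma etaG_eq_fourierWindow (hk : 2 * k + 2 ≤ d) (i : ℕ) :
    etaG d k i = fourierWindow d k (d - 1 - 2 * k) i := by
  ext a
  simp only [etaG, fourierWindow, eV, mul_ite, mul_one, mul_zero, Finset.sum_ite_eq,
    Finset.mem_Icc]
  congr 1
  exact propext (by omega)

lemma xiG_eq_fourierWindow (hk : 2 * k + 2 ≤ d) (j : ℕ) :
    xiG d k j = fourierWindow d (k + 1) (d - 1 - 2 * k) j := by
  ext ⟨a, ha⟩
  simp only [xiG, fourierWindow, eV, mul_ite, mul_one, mul_zero]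
  cases a with
  | zero => simp
  | succ a =>
    simp only [Nat.succ_inj, Finset.sum_ite_eq, Finset.mem_Icc, Nat.add_sub_add_right]
    congr 1
    exact propext (by omega)

lemma mem_Ico_of_etaG_apply_ne_zero (hk : 2 * k + 2 ≤ d) {i : ℕ} {a : Fin d}
    (h : etaG d k i a ≠ 0) : (a : ℕ) ∈ Set.Ico k (d - 1 - k) := by
  rw [etaG_eq_fourierWindow hk] at h
  have := mem_Ico_of_fourierWindow_apply_ne_zero h
  simp only [Set.mem_Ico] at this ⊢
  omega

lemma mem_Ioc_of_xiG_apply_ne_zero (hk : 2 * k + 2 ≤ d) {j : ℕ} {a : Fin d}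
    (h : xiG d k j a ≠ 0) : (a : ℕ) ∈ Set.Ioc k (d - 1 - k) := by
  rw [xiG_eq_fourierWindow hk] at h
  have := mem_Ico_of_fourierWindow_apply_ne_zero h
  simp only [Set.mem_Ico, Set.mem_Ioc] at this ⊢
  omega

lemma eq_of_eV_apply_ne_zero {c : ℕ} {a : Fin d} (h : eV d c a ≠ 0) : (a : ℕ) = c := by
  by_contra hne
  exact h (if_neg hne)

lemma eV_ne_zero {c : ℕ} (hc : c < d) : eV d c ≠ 0 :=
  Function.ne_iff.mpr ⟨⟨c, hc⟩, by simp [eV]⟩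

end Components

lemma stopD_eq_tpv_one (d : ℕ) : stopD d = tpv d 1 1 1 := by
  have hsum : (fun a : Fin d => ∑ i ∈ range d, eV d i a) = 1 := by
    ext a
    simp [eV, a.isLt]
  rw [stopD, hsum]

lemma stopD_ne_zero {d : ℕ} (hd : 0 < d) : stopD d ≠ 0 := by
  have : Nonempty (Fin d) := ⟨⟨0, hd⟩⟩
  rw [stopD_eq_tpv_one]
  exact tpv_ne_zero one_ne_zero one_ne_zero one_ne_zero

/-- The families `A₁, A₂, A₃, B₁, B₂, B₃` of `C^{(d,d-2k)}`, in this order. -/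
def famVec (d k i j : ℕ) : Fin 6 → Fin d × Fin d × Fin d → ℂ :=
  ![tpv d (xiG d k j) (eV d k) (etaG d k i),
    tpv d (xiG d k j) (etaG d k i) (eV d (d - 1 - k)),
    tpv d (eV d (d - 1 - k)) (xiG d k j) (etaG d k i),
    tpv d (etaG d k i) (eV d (d - 1 - k)) (xiG d k j),
    tpv d (etaG d k i) (xiG d k j) (eV d k),
    tpv d (eV d k) (etaG d k i) (xiG d k j)]

/-- The product of the supports of the three factors of `famVec d k i j F`. -/
def famBox (d k : ℕ) : Fin 6 → Set (ℕ × ℕ × ℕ) :=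
  ![Set.Ioc k (d - 1 - k) ×ˢ {k} ×ˢ Set.Ico k (d - 1 - k),
    Set.Ioc k (d - 1 - k) ×ˢ Set.Ico k (d - 1 - k) ×ˢ {d - 1 - k},
    {d - 1 - k} ×ˢ Set.Ioc k (d - 1 - k) ×ˢ Set.Ico k (d - 1 - k),
    Set.Ico k (d - 1 - k) ×ˢ {d - 1 - k} ×ˢ Set.Ioc k (d - 1 - k),
    Set.Ico k (d - 1 - k) ×ˢ Set.Ioc k (d - 1 - k) ×ˢ {k},
    {k} ×ˢ Set.Ico k (d - 1 - k) ×ˢ Set.Ioc k (d - 1 - k)]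

lemma mem_Cset_iff {d k : ℕ} {x : Fin d × Fin d × Fin d → ℂ} :
    x ∈ Cset d k ↔ ∃ i j, i < d - 1 - 2 * k ∧ j < d - 1 - 2 * k ∧ ¬(i = 0 ∧ j = 0) ∧
      ∃ F, x = famVec d k i j F := by
  simp [Cset, famVec, Fin.exists_fin_succ]

section Families

variable {d k k' i j i' j' : ℕ}

lemma mem_famBox_of_famVec_apply_ne_zero (hk : 2 * k + 2 ≤ d) {F : Fin 6}
    {p : Fin d × Fin d × Fin d} (h : famVec d k i j F p ≠ 0) :
    ((p.1 : ℕ), (p.2.1 : ℕ), (p.2.2 : ℕ)) ∈ famBox d k F := by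
  have hη {a : Fin d} (h : etaG d k i a ≠ 0) := mem_Ico_of_etaG_apply_ne_zero hk h
  have hξ {a : Fin d} (h : xiG d k j a ≠ 0) := mem_Ioc_of_xiG_apply_ne_zero hk h
  fin_cases F <;> obtain ⟨h₁, h₂, h₃⟩ := tpv_apply_ne_zero_iff.mp h
  · exact ⟨hξ h₁, eq_of_eV_apply_ne_zero h₂, hη h₃⟩
  · exact ⟨hξ h₁, hη h₂, eq_of_eV_apply_ne_zero h₃⟩
  · exact ⟨eq_of_eV_apply_ne_zero h₁, hξ h₂, hη h₃⟩
  · exact ⟨hη h₁, eq_of_eV_apply_ne_zero h₂, hξ h₃⟩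
  · exact ⟨hη h₁, hξ h₂, eq_of_eV_apply_ne_zero h₃⟩
  · exact ⟨eq_of_eV_apply_ne_zero h₁, hη h₂, hξ h₃⟩

lemma disjoint_famBox (hk : 2 * k + 2 ≤ d) (hk' : 2 * k' + 2 ≤ d) {F F' : Fin 6}
    (hne : k ≠ k' ∨ F ≠ F') : Disjoint (famBox d k F) (famBox d k' F') := by
  rw [Set.disjoint_left]
  rintro ⟨a, b, c⟩ h h'
  fin_cases F <;> fin_cases F' <;>
    simp only [famBox, Fin.zero_eta, Fin.mk_one, Fin.reduceFinMk, Fin.isValue,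
      Matrix.cons_val_zero, Matrix.cons_val_one, Matrix.cons_val, Set.mem_prod, Set.mem_Ioc,
      Set.mem_Ico, Set.mem_singleton_iff, ne_eq, Fin.reduceEq, zero_ne_one, one_ne_zero,
      not_true_eq_false, not_false_eq_true, or_true, or_false] at h h' hne <;>
    omega

lemma famVec_ne_zero (hk : 2 * k + 2 ≤ d) (F : Fin 6) : famVec d k i j F ≠ 0 := by
  have hη : etaG d k i ≠ 0 := by
    rw [etaG_eq_fourierWindow hk]; exact fourierWindow_ne_zero (by omega) (by omega) i
  have hξ : xiG d k j ≠ 0 := by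
    rw [xiG_eq_fourierWindow hk]; exact fourierWindow_ne_zero (by omega) (by omega) j
  have he : eV d k ≠ 0 := eV_ne_zero (by omega)
  have he' : eV d (d - 1 - k) ≠ 0 := eV_ne_zero (by omega)
  fin_cases F <;> simp only [famVec] <;> apply tpv_ne_zero <;> assumption

lemma inpD_famVec_eq_zero_of_ne_family (hk : 2 * k + 2 ≤ d) (hk' : 2 * k' + 2 ≤ d)
    {F F' : Fin 6} (hne : k ≠ k' ∨ F ≠ F') :
    inpD d (famVec d k i j F) (famVec d k' i' j' F') = 0 := by
  refine inpD_eq_zero_of_disjoint fun p => ?_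
  by_contra! h
  exact Set.disjoint_left.mp (disjoint_famBox hk hk' hne)
    (mem_famBox_of_famVec_apply_ne_zero hk h.1) (mem_famBox_of_famVec_apply_ne_zero hk' h.2)

lemma inpD_famVec_eq_zero_of_ne_freq (hk : 2 * k + 2 ≤ d) (hi : i < d - 1 - 2 * k)
    (hi' : i' < d - 1 - 2 * k) (hj : j < d - 1 - 2 * k) (hj' : j' < d - 1 - 2 * k)
    (hne : i ≠ i' ∨ j ≠ j') (F : Fin 6) :
    inpD d (famVec d k i j F) (famVec d k i' j' F) = 0 := by
  rcases hne with hne | hne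
  · have hη : star (etaG d k i) ⬝ᵥ etaG d k i' = 0 := by
      rw [etaG_eq_fourierWindow hk, etaG_eq_fourierWindow hk]
      exact star_fourierWindow_dotProduct_eq_zero (by omega) hi hi' hne
    fin_cases F <;> simp [famVec, inpD_tpv, hη]
  · have hξ : star (xiG d k j) ⬝ᵥ xiG d k j' = 0 := by
      rw [xiG_eq_fourierWindow hk, xiG_eq_fourierWindow hk]
      exact star_fourierWindow_dotProduct_eq_zero (by omega) hj hj' hne
    fin_cases F <;> simp [famVec, inpD_tpv, hξ]

lemma inpD_famVec_stopD_eq_zero (hk : 2 * k + 2 ≤ d) (hi : i < d - 1 - 2 * k)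
    (hj : j < d - 1 - 2 * k) (hij : ¬(i = 0 ∧ j = 0)) (F : Fin 6) :
    inpD d (famVec d k i j F) (stopD d) = 0 := by
  rw [stopD_eq_tpv_one]
  rcases not_and_or.mp hij with hi0 | hj0
  · have hη : star (etaG d k i) ⬝ᵥ 1 = 0 := by
      rw [etaG_eq_fourierWindow hk]
      exact star_fourierWindow_dotProduct_one (by omega) hi hi0
    fin_cases F <;> simp [famVec, inpD_tpv, hη]
  · have hξ : star (xiG d k j) ⬝ᵥ 1 = 0 := by
      rw [xiG_eq_fourierWindow hk]
      exact star_fourierWindow_dotProduct_one (by omega) hj hj0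
    fin_cases F <;> simp [famVec, inpD_tpv, hξ]

end Families

def famIndex (d : ℕ) : Finset (Σ _ : ℕ, Fin 6 × ℕ × ℕ) :=
  (range ((d - 3) / 2 + 1)).sigma fun k =>
    univ ×ˢ ((range (d - 1 - 2 * k) ×ˢ range (d - 1 - 2 * k)).erase (0, 0))

lemma mem_famIndex {d k i j : ℕ} {F : Fin 6} :
    (⟨k, F, i, j⟩ : Σ _ : ℕ, Fin 6 × ℕ × ℕ) ∈ famIndex d ↔
      k ≤ (d - 3) / 2 ∧ ¬(i = 0 ∧ j = 0) ∧ i < d - 1 - 2 * k ∧ j < d - 1 - 2 * k := by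
  simp only [famIndex, mem_sigma, mem_range, Order.lt_add_one_iff, mem_product, mem_univ,
    true_and, mem_erase, ne_eq, Prod.mk.injEq]

lemma Uodd_eq_insert_image (d : ℕ) :
    Uodd d = insert (stopD d)
      ((fun p : Σ _ : ℕ, Fin 6 × ℕ × ℕ => famVec d p.1 p.2.2.1 p.2.2.2 p.2.1) '' famIndex d) := by
  rw [Uodd, Set.union_singleton]
  congr 1
  ext x
  simp only [mem_Cset_iff, not_and, exists_and_left, Set.mem_ofPred_eq, famIndex, coe_sigma,
    coe_range, coe_product, coe_univ, coe_erase, Set.mem_image, Set.mem_sigma_iff, Set.mem_Iio,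
    Order.lt_add_one_iff, Set.mem_prod, Set.mem_univ, Set.mem_sdiff, Set.mem_singleton_iff,
    true_and, Sigma.exists, Prod.exists, Prod.mk.injEq]
  constructor
  · rintro ⟨k, hk, i, hi, j, hj, hij, F, rfl⟩
    exact ⟨k, F, i, j, ⟨hk, ⟨hi, hj⟩, hij⟩, rfl⟩
  · rintro ⟨k, F, i, j, ⟨hk, ⟨hi, hj⟩, hij⟩, rfl⟩
    exact ⟨k, hk, i, hi, j, hj, hij, F, rfl⟩

lemma card_famIndex {d : ℕ} (hd : 3 ≤ d) :
    (famIndex d).card = ∑ k ∈ range ((d - 3) / 2 + 1), 6 * ((d - 1 - 2 * k) ^ 2 - 1) := by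
  rw [famIndex, card_sigma]
  refine Finset.sum_congr rfl fun k hk => ?_
  have hm : 0 < d - 1 - 2 * k := by simp only [mem_range] at hk; omega
  rw [card_product, card_univ, Fintype.card_fin, card_erase_of_mem (by simp [hm]), card_product,
    card_range, sq]

lemma sum_six_mul_sq_sub_one {N : ℕ} (hN : 1 ≤ N) :
    ∑ k ∈ range N, 6 * ((2 * N - 2 * k) ^ 2 - 1) + 1 =
      (2 * N + 1) ^ 3 - 4 * (2 * N + 1) + 4 := by
  have hreflect : ∑ k ∈ range N, 6 * ((2 * N - 2 * k) ^ 2 - 1) =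
      ∑ k ∈ range N, (24 * k ^ 2 + 48 * k + 18) := by
    rw [← Finset.sum_range_reflect]
    refine Finset.sum_congr rfl fun k hk => ?_
    simp only [mem_range] at hk
    rw [show 2 * N - 2 * (N - 1 - k) = 2 * k + 2 by omega,
      show (2 * k + 2) ^ 2 = 4 * k ^ 2 + 8 * k + 3 + 1 by ring]
    omega
  have hsum : ∀ M, ∑ k ∈ range M, (24 * k ^ 2 + 48 * k + 18) + 2 * M =
      8 * M ^ 3 + 12 * M ^ 2 := by
    intro M
    induction M with
    | zero => simp
    | succ M ih => rw [sum_range_succ]; nlinarith [ih]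
  have hcube : (2 * N + 1) ^ 3 = 8 * N ^ 3 + 12 * N ^ 2 + 6 * N + 1 := by ring
  have hsq : N ≤ N ^ 2 := by nlinarith
  have := hsum N
  rw [hreflect]
  omega

section FamilyIndex

variable {d : ℕ} {p q : Σ _ : ℕ, Fin 6 × ℕ × ℕ}

lemma famVec_ne_zero_of_mem (hp : p ∈ famIndex d) :
    famVec d p.1 p.2.2.1 p.2.2.2 p.2.1 ≠ 0 := by
  obtain ⟨k, F, i, j⟩ := p
  obtain ⟨hk, -, hi, -⟩ := mem_famIndex.mp hp
  exact famVec_ne_zero (k := k) (by omega) F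

lemma inpD_famVec_stopD_eq_zero_of_mem (hp : p ∈ famIndex d) :
    inpD d (famVec d p.1 p.2.2.1 p.2.2.2 p.2.1) (stopD d) = 0 := by
  obtain ⟨k, F, i, j⟩ := p
  obtain ⟨hk, hij, hi, hj⟩ := mem_famIndex.mp hp
  exact inpD_famVec_stopD_eq_zero (k := k) (by omega) hi hj hij F

lemma inpD_famVec_eq_zero_of_mem (hp : p ∈ famIndex d) (hq : q ∈ famIndex d) (hpq : p ≠ q) :
    inpD d (famVec d p.1 p.2.2.1 p.2.2.2 p.2.1) (famVec d q.1 q.2.2.1 q.2.2.2 q.2.1) = 0 := by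
  obtain ⟨k, F, i, j⟩ := p
  obtain ⟨k', F', i', j'⟩ := q
  obtain ⟨hk, -, hi, hj⟩ := mem_famIndex.mp hp
  obtain ⟨hk', -, hi', hj'⟩ := mem_famIndex.mp hq
  by_cases hkF : k = k' ∧ F = F'
  · obtain ⟨rfl, rfl⟩ := hkF
    refine inpD_famVec_eq_zero_of_ne_freq (k := k) (by omega) hi hi' hj hj' ?_ F
    by_contra! h
    obtain ⟨rfl, rfl⟩ := h
    exact hpq rfl
  · exact inpD_famVec_eq_zero_of_ne_family (k := k) (k' := k') (by omega) (by omega)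
      (not_and_or.mp hkF)

end FamilyIndex

/-- For every odd d ≥ 3, the vectors of U_d^odd are nonzero, pairwise orthogonal,
and U_d^odd has exactly d³ − 4d + 4 elements. -/
theorem Uodd_pairwise_orthogonal_nonzero (d : ℕ) (hd : 3 ≤ d) (hodd : Odd d) :
    (∀ x ∈ Uodd d, x ≠ 0) ∧
    (∀ x ∈ Uodd d, ∀ y ∈ Uodd d, x ≠ y → inpD d x y = 0) ∧
    (Uodd d).ncard = d ^ 3 - 4 * d + 4 := by
  obtain ⟨hnz, horth, hcard⟩ := orthogonal_insert_image (famIndex d) _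
    (stopD_ne_zero (by omega)) (fun _ => famVec_ne_zero_of_mem)
    (fun _ hp _ hq => inpD_famVec_eq_zero_of_mem hp hq) (fun _ => inpD_famVec_stopD_eq_zero_of_mem)
  rw [Uodd_eq_insert_image]
  refine ⟨hnz, horth, ?_⟩
  obtain ⟨N, rfl⟩ := hodd
  rw [hcard, card_famIndex hd, show (2 * N + 1 - 3) / 2 + 1 = N by omega, Nat.add_sub_cancel,
    sum_six_mul_sq_sub_one (by omega)]
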